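/- Let τ3 be the Hopf algebra automorphism of H_8 determined by τ3(x) = y, τ3(y) = x, τ3(z) = (1/2)(z + xz + yz - xyz). Then, as Yetter–Drinfeld modules over H_8: (M⟨b·i, x⟩)^{τ3} ≅ M⟨-b·i, y⟩ for b = ±1; (M⟨(xy,x)⟩)^{τ3} ≅ M⟨(y,xy)⟩; and (W^{b1,-1})^{τ3} ≅ W^{-b1,-1} for b1 = ±1. -/

import Mathlib

/-! τ₃ swaps `x` and `y`, and since `(1 + x + y - xy)/2 = 1 - 2f₁₁` it sends `z` to `z - 2f₁₁z`.
As `f₁₁` is an idempotent orthogonal to the other `f_jk`, this makes τ₃ an involution fixing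
`f₀₀z`, swapping `f₁₀z` and `f₀₁z` and negating `f₁₁z`. Twisting therefore only permutes or
rescales the coaction coefficients, and the twisted action of each generator is read off from the
eigenvalues of `x` and `y`. The isomorphisms are the identity, the swap of the two basis vectors,
and the rescaling `p₂ ↦ -i b₁ p₂`; `H`-linearity only has to be checked on `x, y, z`,
which generate `H₈`. -/

open TensorProduct Coalgebra

noncomputable section

/-- The Kac–Paljutkin algebra structure: a Hopf algebra `H` over `K` together with
generators `x, y, z` satisfying the defining relations of `H₈`, such that
`1, x, y, xy, z, xz, yz, xyz` is a linear basis, with the prescribed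
comultiplication, counit and antipode values. -/
structure KPAlg (K : Type*) (H : Type*) [Field K] [Ring H] [HopfAlgebra K H] where
  x : H
  y : H
  z : H
  basis_indep : LinearIndependent K
    ![(1 : H), x, y, x*y, z, x*z, y*z, x*y*z]
  basis_span : Submodule.span K
    (Set.range ![(1 : H), x, y, x*y, z, x*z, y*z, x*y*z]) = ⊤
  x_sq : x^2 = 1
  y_sq : y^2 = 1
  xy_comm : x*y = y*x
  zx : z*x = y*z
  zy : z*y = x*z
  z_sq : z^2 = (2:K)⁻¹ • (1 + x + y - x*y)
  comul_x : comul (R := K) x = x ⊗ₜ[K] x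
  comul_y : comul (R := K) y = y ⊗ₜ[K] y
  comul_z : comul (R := K) z =
    (2:K)⁻¹ • (z ⊗ₜ[K] z + z ⊗ₜ[K] (x*z) + (y*z) ⊗ₜ[K] z - (y*z) ⊗ₜ[K] (x*z))
  counit_x : counit (R := K) x = 1
  counit_y : counit (R := K) y = 1
  counit_z : counit (R := K) z = 1
  antipode_x : HopfAlgebra.antipode (R := K) x = x
  antipode_y : HopfAlgebra.antipode (R := K) y = y
  antipode_z : HopfAlgebra.antipode (R := K) z = z

end


open TensorProduct Coalgebra

noncomputable section

variable (K : Type*) (H : Type*) [Field K] [Ring H] [HopfAlgebra K H]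

/-- The data of a candidate Yetter–Drinfeld module over `H`: a `K`-bilinear
action of `H` and a `K`-linear coaction. -/
structure PreYD (M : Type*) [AddCommGroup M] [Module K M] where
  act : H →ₗ[K] M →ₗ[K] M
  coact : M →ₗ[K] H ⊗[K] M

namespace PreYD

variable {K H}
variable {M : Type*} [AddCommGroup M] [Module K M]
variable {N : Type*} [AddCommGroup N] [Module K N]

/-- The Yetter–Drinfeld compatibility map `h ⊗ m ↦ h₍₁₎ m₍₋₁₎ S(h₍₃₎) ⊗ h₍₂₎ · m₍₀₎`. -/
def ydRHS (P : PreYD K H M) : H ⊗[K] M →ₗ[K] H ⊗[K] M :=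
  let Δ : H →ₗ[K] H ⊗[K] H := comul (R := K)
  let S : H →ₗ[K] H := HopfAlgebra.antipode (R := K)
  let Δ₂ : H →ₗ[K] H ⊗[K] (H ⊗[K] H) :=
    (TensorProduct.map LinearMap.id Δ) ∘ₗ Δ
  -- h₁ ⊗ (h₂ ⊗ h₃) ↦ (h₁ ⊗ h₃) ⊗ h₂
  let e1 : H ⊗[K] (H ⊗[K] H) →ₗ[K] (H ⊗[K] H) ⊗[K] H :=
    (TensorProduct.assoc K H H H).symm.toLinearMap ∘ₗ
      (TensorProduct.map LinearMap.id (TensorProduct.comm K H H).toLinearMap)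
  -- (h₁ ⊗ h₃) ⊗ g ↦ h₁ * g * S h₃
  let mulFinal : (H ⊗[K] H) ⊗[K] H →ₗ[K] H :=
    (LinearMap.mul' K H) ∘ₗ
    (TensorProduct.map LinearMap.id (LinearMap.mul' K H)) ∘ₗ
    (TensorProduct.map LinearMap.id (TensorProduct.comm K H H).toLinearMap) ∘ₗ
    (TensorProduct.assoc K H H H).toLinearMap ∘ₗ
    (TensorProduct.map (TensorProduct.map LinearMap.id S) LinearMap.id)
  (TensorProduct.map mulFinal (TensorProduct.lift P.act)) ∘ₗ
    (TensorProduct.tensorTensorTensorComm K (H ⊗[K] H) H H M).toLinearMap ∘ₗ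
    (TensorProduct.map e1 LinearMap.id) ∘ₗ
    (TensorProduct.map Δ₂ P.coact)

/-- The axioms making a `PreYD` a genuine Yetter–Drinfeld module: `M` is a left
`H`-module, a left `H`-comodule, and the Yetter–Drinfeld compatibility holds. -/
def IsYD (P : PreYD K H M) : Prop :=
  (∀ m : M, P.act 1 m = m) ∧
  (∀ g h : H, ∀ m : M, P.act (g * h) m = P.act g (P.act h m)) ∧
  (∀ m : M, (TensorProduct.assoc K H H M)
      ((TensorProduct.map (comul (R := K)) LinearMap.id) (P.coact m)) =
    (TensorProduct.map LinearMap.id P.coact) (P.coact m)) ∧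
  (∀ m : M, (TensorProduct.lid K M)
      ((TensorProduct.map (counit (R := K)) LinearMap.id) (P.coact m)) = m) ∧
  (∀ (h : H) (m : M), P.coact (P.act h m) = P.ydRHS (h ⊗ₜ[K] m))

/-- Isomorphism of Yetter–Drinfeld module data: a linear equivalence commuting
with the actions and the coactions. -/
def Equiv (P : PreYD K H M) (Q : PreYD K H N) : Prop :=
  ∃ f : M ≃ₗ[K] N,
    (∀ (h : H) (m : M), f (P.act h m) = Q.act h (f m)) ∧
    (∀ m : M, Q.coact (f m) =
      (TensorProduct.map LinearMap.id (f : M →ₗ[K] N)) (P.coact m))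

/-- A `K`-subspace which is both an `H`-submodule and an `H`-subcomodule. -/
def IsSubYD (P : PreYD K H M) (S : Submodule K M) : Prop :=
  (∀ h : H, ∀ m ∈ S, P.act h m ∈ S) ∧
  (∀ m ∈ S, P.coact m ∈
    LinearMap.range (TensorProduct.map (LinearMap.id : H →ₗ[K] H) S.subtype))

/-- A Yetter–Drinfeld module is simple if it is nonzero and has no nonzero
proper Yetter–Drinfeld submodule. -/
def IsSimple (P : PreYD K H M) : Prop :=
  (∃ m : M, m ≠ 0) ∧
  ∀ S : Submodule K M, P.IsSubYD S → S = ⊥ ∨ S = ⊤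

/-- The braiding `c(v ⊗ w) = v₍₋₁₎ · w ⊗ v₍₀₎` of a Yetter–Drinfeld module. -/
def braiding (P : PreYD K H M) : M ⊗[K] M →ₗ[K] M ⊗[K] M :=
  (TensorProduct.map (TensorProduct.lift P.act) LinearMap.id) ∘ₗ
  (TensorProduct.assoc K H M M).symm.toLinearMap ∘ₗ
  (TensorProduct.map LinearMap.id (TensorProduct.comm K M M).toLinearMap) ∘ₗ
  (TensorProduct.assoc K H M M).toLinearMap ∘ₗ
  (TensorProduct.map P.coact LinearMap.id)

end PreYD

end

noncomputable section

namespace KPAlg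

variable {K : Type*} {H : Type*} [Field K] [Ring H] [HopfAlgebra K H]

/-- `f₀₀ = (1/4)(1+x)(1+y)`. -/
def f00 (P : KPAlg K H) : H := (4:K)⁻¹ • ((1 + P.x) * (1 + P.y))
/-- `f₁₀ = (1/4)(1-x)(1+y)`. -/
def f10 (P : KPAlg K H) : H := (4:K)⁻¹ • ((1 - P.x) * (1 + P.y))
/-- `f₀₁ = (1/4)(1+x)(1-y)`. -/
def f01 (P : KPAlg K H) : H := (4:K)⁻¹ • ((1 + P.x) * (1 - P.y))
/-- `f₁₁ = (1/4)(1-x)(1-y)`. -/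
def f11 (P : KPAlg K H) : H := (4:K)⁻¹ • ((1 - P.x) * (1 - P.y))

/-- `w = (f₀₀ + √i f₁₀ + (1/√i) f₀₁ + i f₁₁) z`. -/
def wEl (P : KPAlg K H) (i sqi : K) : H :=
  (P.f00 + sqi • P.f10 + sqi⁻¹ • P.f01 + i • P.f11) * P.z

section Chars

variable (P : KPAlg K H) (i : K)

/-- The one-dimensional Yetter–Drinfeld module data `M⟨b,g⟩`:
`x·v = b²v`, `y·v = b²v`, `z·v = bv`, `ρ(v) = g ⊗ v`. -/
def IsM1 (b : K) (g : H) (Q : PreYD K H K) : Prop :=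
  (∀ v : K, Q.act P.x v = b^2 * v) ∧
  (∀ v : K, Q.act P.y v = b^2 * v) ∧
  (∀ v : K, Q.act P.z v = b * v) ∧
  (∀ v : K, Q.coact v = g ⊗ₜ[K] v)

/-- Basis vector `(1,0)` of `K × K`. -/
def E1 : K × K := (1, 0)
/-- Basis vector `(0,1)` of `K × K`. -/
def E2 : K × K := (0, 1)

/-- The two-dimensional Yetter–Drinfeld module data `M⟨(1,xy)⟩`. -/
def IsM1xy (Q : PreYD K H (K × K)) : Prop :=
  Q.coact E1 = (1 : H) ⊗ₜ[K] E1 ∧ Q.coact E2 = (P.x * P.y) ⊗ₜ[K] E2 ∧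
  Q.act P.x E1 = -E1 ∧ Q.act P.x E2 = -E2 ∧
  Q.act P.y E1 = -E1 ∧ Q.act P.y E2 = -E2 ∧
  Q.act P.z E1 = i • E2 ∧ Q.act P.z E2 = i • E1

/-- The two-dimensional Yetter–Drinfeld module data `M⟨(x,y)⟩`. -/
def IsMxy (Q : PreYD K H (K × K)) : Prop :=
  Q.coact E1 = P.x ⊗ₜ[K] E1 ∧ Q.coact E2 = P.y ⊗ₜ[K] E2 ∧
  Q.act P.x E1 = E1 ∧ Q.act P.x E2 = E2 ∧
  Q.act P.y E1 = E1 ∧ Q.act P.y E2 = E2 ∧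
  Q.act P.z E1 = E2 ∧ Q.act P.z E2 = E1

/-- The two-dimensional Yetter–Drinfeld module data `M⟨(g₁,g₂)⟩`. -/
def IsMg (g₁ g₂ : H) (Q : PreYD K H (K × K)) : Prop :=
  Q.coact E1 = g₁ ⊗ₜ[K] E1 ∧ Q.coact E2 = g₂ ⊗ₜ[K] E2 ∧
  Q.act P.x E1 = E1 ∧ Q.act P.y E1 = -E1 ∧ Q.act P.z E1 = E2 ∧
  Q.act P.x E2 = -E2 ∧ Q.act P.y E2 = E2 ∧ Q.act P.z E2 = E1

/-- The two-dimensional Yetter–Drinfeld module data `W^{b₁,b₂}` in the basis `w₁, w₂`. -/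
def IsW (b₁ b₂ : K) (Q : PreYD K H (K × K)) : Prop :=
  Q.act P.x E1 = (i * b₁) • E2 ∧ Q.act P.x E2 = (-(i * b₁)) • E1 ∧
  Q.act P.y E1 = (i * b₁) • E2 ∧ Q.act P.y E2 = (-(i * b₁)) • E1 ∧
  Q.act P.z E1 = ((1 - i * b₁) * b₂ * (2:K)⁻¹) • (E1 - E2) ∧
  Q.act P.z E2 = ((1 - i * b₁) * b₂ * (2:K)⁻¹) • (E1 + E2) ∧
  Q.coact E1 = ((2:K)⁻¹ • ((1 + P.y) * P.z)) ⊗ₜ[K] E1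
      + ((2:K)⁻¹ • ((1 - P.y) * P.z)) ⊗ₜ[K] E2 ∧
  Q.coact E2 = ((2:K)⁻¹ • (P.x * (1 + P.y) * P.z)) ⊗ₜ[K] E2
      + ((2:K)⁻¹ • (P.x * (1 - P.y) * P.z)) ⊗ₜ[K] E1

/-- The two-dimensional Yetter–Drinfeld module data `W^{b₁,b₂}` in the basis `p₁, p₂`. -/
def IsWp (b₁ b₂ : K) (Q : PreYD K H (K × K)) : Prop :=
  Q.act P.x E1 = E1 ∧ Q.act P.y E1 = E1 ∧ Q.act P.z E1 = b₂ • E1 ∧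
  Q.act P.x E2 = -E2 ∧ Q.act P.y E2 = -E2 ∧ Q.act P.z E2 = (-(i * b₁ * b₂)) • E2 ∧
  Q.coact E1 = ((P.f00 - (i * b₁) • P.f11) * P.z) ⊗ₜ[K] E1
      + ((P.f10 + (i * b₁) • P.f01) * P.z) ⊗ₜ[K] E2 ∧
  Q.coact E2 = ((P.f00 + (i * b₁) • P.f11) * P.z) ⊗ₜ[K] E2
      + ((P.f10 - (i * b₁) • P.f01) * P.z) ⊗ₜ[K] E1

/-- The two-dimensional Yetter–Drinfeld module data `W₁ᵃ`. -/
def IsW1a (sqi a : K) (Q : PreYD K H (K × K)) : Prop :=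
  Q.act P.x E1 = -E1 ∧ Q.act P.y E1 = E1 ∧
  Q.act P.z E1 = ((2:K)⁻¹ * (1 - i) * (a + 1)) • E2 ∧
  Q.act P.x E2 = E2 ∧ Q.act P.y E2 = -E2 ∧
  Q.act P.z E2 = ((2:K)⁻¹ * (1 + i) * (a + 1)) • E1 ∧
  Q.coact E1 = ((2:K)⁻¹ • ((P.x + P.y) * P.wEl i sqi)) ⊗ₜ[K] E1
      + (((2:K)⁻¹ * sqi) • ((P.x - P.y) * P.wEl i sqi)) ⊗ₜ[K] E2 ∧
  Q.coact E2 = ((2:K)⁻¹ • ((1 + P.x * P.y) * P.wEl i sqi)) ⊗ₜ[K] E2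
      + (((2:K)⁻¹ * sqi) • ((1 - P.x * P.y) * P.wEl i sqi)) ⊗ₜ[K] E1

/-- The two-dimensional Yetter–Drinfeld module data `W₂ᵃ`. -/
def IsW2a (sqi a : K) (Q : PreYD K H (K × K)) : Prop :=
  Q.act P.x E1 = E1 ∧ Q.act P.y E1 = -E1 ∧
  Q.act P.z E1 = ((2:K)⁻¹ * (1 - i) * (a + 1)) • E2 ∧
  Q.act P.x E2 = -E2 ∧ Q.act P.y E2 = E2 ∧
  Q.act P.z E2 = ((2:K)⁻¹ * (1 + i) * (a + 1)) • E1 ∧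
  Q.coact E1 = ((2:K)⁻¹ • ((P.x + P.y) * P.wEl i sqi)) ⊗ₜ[K] E1
      + (((2:K)⁻¹ * sqi) • ((P.x - P.y) * P.wEl i sqi)) ⊗ₜ[K] E2 ∧
  Q.coact E2 = ((2:K)⁻¹ • ((1 + P.x * P.y) * P.wEl i sqi)) ⊗ₜ[K] E2
      + (((2:K)⁻¹ * sqi) • ((1 - P.x * P.y) * P.wEl i sqi)) ⊗ₜ[K] E1

end Chars

end KPAlg

/-- `Q` is the direct sum of the Yetter–Drinfeld module data `Q₁` and `Q₂`,
with componentwise action and coaction. -/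
def IsProdYD {K H : Type*} [Field K] [Ring H] [HopfAlgebra K H]
    {M₁ M₂ : Type*} [AddCommGroup M₁] [Module K M₁] [AddCommGroup M₂] [Module K M₂]
    (Q₁ : PreYD K H M₁) (Q₂ : PreYD K H M₂) (Q : PreYD K H (M₁ × M₂)) : Prop :=
  (∀ (h : H) (m₁ : M₁) (m₂ : M₂), Q.act h (m₁, m₂) = (Q₁.act h m₁, Q₂.act h m₂)) ∧
  (∀ (m₁ : M₁) (m₂ : M₂), Q.coact (m₁, m₂) =
    (TensorProduct.map (LinearMap.id (R := K) (M := H)) (LinearMap.inl K M₁ M₂)) (Q₁.coact m₁) +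
    (TensorProduct.map LinearMap.id (LinearMap.inr K M₁ M₂)) (Q₂.coact m₂))

end

noncomputable section

open TensorProduct

/-- The twist `V^ψ` of a Yetter–Drinfeld module by a Hopf algebra automorphism `ψ`:
the action is `h ·_ψ v = ψ(h)·v` and the coaction is `(ψ⁻¹ ⊗ id) ∘ ρ`. -/
def PreYD.twist {K H : Type*} [Field K] [Ring H] [HopfAlgebra K H]
    {M : Type*} [AddCommGroup M] [Module K M]
    (Q : PreYD K H M) (τ : H ≃ₐ[K] H) : PreYD K H M where
  act := Q.act ∘ₗ τ.toLinearMap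
  coact := (TensorProduct.map τ.symm.toLinearMap LinearMap.id) ∘ₗ Q.coact


namespace PreYD

variable {K H : Type*} [Field K] [Ring H] [HopfAlgebra K H]
variable {M N : Type*} [AddCommGroup M] [Module K M] [AddCommGroup N] [Module K N]

def IsModule (Q : PreYD K H M) : Prop :=
  (∀ m : M, Q.act 1 m = m) ∧ ∀ (g h : H) (m : M), Q.act (g * h) m = Q.act g (Q.act h m)

theorem IsYD.isModule {Q : PreYD K H M} (hQ : Q.IsYD) : Q.IsModule :=
  ⟨hQ.1, hQ.2.1⟩

@[simp]
theorem twist_act (Q : PreYD K H M) (τ : H ≃ₐ[K] H) (h : H) :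
    (Q.twist τ).act h = Q.act (τ h) :=
  rfl

@[simp]
theorem twist_coact (Q : PreYD K H M) (τ : H ≃ₐ[K] H) :
    (Q.twist τ).coact = map τ.symm.toLinearMap LinearMap.id ∘ₗ Q.coact :=
  rfl

theorem IsModule.twist {Q : PreYD K H M} (hQ : Q.IsModule) (τ : H ≃ₐ[K] H) :
    (Q.twist τ).IsModule :=
  ⟨fun m => by simp [hQ.1], fun g h m => by simp [hQ.2]⟩

theorem act_comp_eq_of_adjoin_eq_top {Q : PreYD K H M} {Q' : PreYD K H N}
    (hQ : Q.IsModule) (hQ' : Q'.IsModule) {s : Set H} (hs : Algebra.adjoin K s = ⊤)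
    {f : M →ₗ[K] N} (hf : ∀ h ∈ s, f ∘ₗ Q.act h = Q'.act h ∘ₗ f) (h : H) :
    f ∘ₗ Q.act h = Q'.act h ∘ₗ f := by
  have hh : h ∈ Algebra.adjoin K s := hs ▸ Algebra.mem_top
  induction hh using Algebra.adjoin_induction with
  | mem h hh => exact hf h hh
  | algebraMap r => ext m; simp [Algebra.algebraMap_eq_smul_one, hQ.1, hQ'.1]
  | add g h _ _ hg hh => rw [map_add, map_add, LinearMap.comp_add, LinearMap.add_comp, hg, hh]
  | mul g h _ _ hg hh =>
    ext m
    have hg' := LinearMap.congr_fun hg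
    have hh' := LinearMap.congr_fun hh
    simp only [LinearMap.comp_apply] at hg' hh' ⊢
    rw [hQ.2, hQ'.2, hg', hh']

theorem equiv_of_adjoin_eq_top {Q : PreYD K H M} {Q' : PreYD K H N}
    (hQ : Q.IsModule) (hQ' : Q'.IsModule) {s : Set H} (hs : Algebra.adjoin K s = ⊤)
    (f : M ≃ₗ[K] N) (hact : ∀ h ∈ s, f.toLinearMap ∘ₗ Q.act h = Q'.act h ∘ₗ f.toLinearMap)
    (hcoact : Q'.coact ∘ₗ f.toLinearMap = map LinearMap.id f.toLinearMap ∘ₗ Q.coact) :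
    Q.Equiv Q' :=
  ⟨f, fun h => LinearMap.congr_fun (act_comp_eq_of_adjoin_eq_top hQ hQ' hs hact h),
    LinearMap.congr_fun hcoact⟩

end PreYD

namespace KPAlg

variable {K H : Type*} [Field K] [Ring H] [HopfAlgebra K H] (P : KPAlg K H)

theorem adjoin_xyz_eq_top : Algebra.adjoin K {P.x, P.y, P.z} = ⊤ := by
  have hx : P.x ∈ Algebra.adjoin K {P.x, P.y, P.z} := Algebra.subset_adjoin (by simp)
  have hy : P.y ∈ Algebra.adjoin K {P.x, P.y, P.z} := Algebra.subset_adjoin (by simp)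
  have hz : P.z ∈ Algebra.adjoin K {P.x, P.y, P.z} := Algebra.subset_adjoin (by simp)
  rw [← Algebra.toSubmodule_eq_top, eq_top_iff, ← P.basis_span, Submodule.span_le,
    Set.range_subset_iff]
  intro j
  fin_cases j <;> simp [Subalgebra.mul_mem, hx, hy, hz]

theorem linearMap_ext_E {V : Type*} [AddCommGroup V] [Module K V] {φ ψ : K × K →ₗ[K] V}
    (h₁ : φ E1 = ψ E1) (h₂ : φ E2 = ψ E2) : φ = ψ :=
  LinearMap.prod_ext (LinearMap.ext_ring h₁) (LinearMap.ext_ring h₂)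

theorem x_mul_self : P.x * P.x = 1 := by rw [← sq, P.x_sq]

theorem y_mul_self : P.y * P.y = 1 := by rw [← sq, P.y_sq]

theorem x_mul_x_mul (a : H) : P.x * (P.x * a) = a := by rw [← mul_assoc, x_mul_self, one_mul]

theorem y_mul_x_mul (a : H) : P.y * (P.x * a) = P.x * (P.y * a) := by
  rw [← mul_assoc, ← P.xy_comm, mul_assoc]

theorem x_mul_f11 : P.x * P.f11 = -P.f11 := by
  simp only [f11, mul_smul_comm, mul_sub, sub_mul, mul_one, one_mul, x_mul_self, x_mul_x_mul]
  module

theorem y_mul_f11 : P.y * P.f11 = -P.f11 := by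
  simp only [f11, mul_smul_comm, mul_sub, sub_mul, mul_one, one_mul, y_mul_self, y_mul_x_mul,
    P.xy_comm.symm]
  module

theorem f00_mul_f11 : P.f00 * P.f11 = 0 := by
  simp only [f00, smul_mul_assoc, mul_assoc, add_mul, one_mul, mul_add, mul_one, mul_neg,
    x_mul_f11, y_mul_f11]
  module

theorem f10_mul_f11 : P.f10 * P.f11 = 0 := by
  simp only [f10, smul_mul_assoc, mul_assoc, add_mul, sub_mul, one_mul, mul_add, mul_one, mul_neg,
    x_mul_f11, y_mul_f11]
  module

theorem f01_mul_f11 : P.f01 * P.f11 = 0 := by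
  simp only [f01, smul_mul_assoc, mul_assoc, add_mul, sub_mul, one_mul, mul_sub, mul_one, mul_neg,
    x_mul_f11, y_mul_f11]
  module

theorem f11_mul_f11 [CharZero K] : P.f11 * P.f11 = P.f11 := by
  nth_rw 1 [f11]
  simp only [smul_mul_assoc, mul_assoc, sub_mul, one_mul, mul_sub, mul_one, mul_neg, x_mul_f11,
    y_mul_f11]
  module

def IsTau3 (τ : H ≃ₐ[K] H) : Prop :=
  τ P.x = P.y ∧ τ P.y = P.x ∧
    τ P.z = (2:K)⁻¹ • (P.z + P.x * P.z + P.y * P.z - P.x * P.y * P.z)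

namespace IsTau3

variable {P} {τ : H ≃ₐ[K] H}

theorem apply_z [CharZero K] (hτ : P.IsTau3 τ) : τ P.z = P.z - (2:K) • (P.f11 * P.z) := by
  rw [hτ.2.2, f11]
  simp only [smul_mul_assoc, sub_mul, one_mul, mul_sub, mul_one, mul_assoc]
  module

theorem apply_f11 (hτ : P.IsTau3 τ) : τ P.f11 = P.f11 := by
  simp only [f11, map_smul, map_mul, map_sub, map_one, hτ.1, hτ.2.1, mul_sub, sub_mul, one_mul,
    mul_one, P.xy_comm]
  module

theorem apply_f00 (hτ : P.IsTau3 τ) : τ P.f00 = P.f00 := by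
  simp only [f00, map_smul, map_mul, map_add, map_one, hτ.1, hτ.2.1, mul_add, add_mul, one_mul,
    mul_one, P.xy_comm]
  module

theorem apply_f10 (hτ : P.IsTau3 τ) : τ P.f10 = P.f01 := by
  simp only [f10, f01, map_smul, map_mul, map_add, map_sub, map_one, hτ.1, hτ.2.1, mul_add,
    add_mul, mul_sub, sub_mul, one_mul, mul_one, P.xy_comm]
  module

theorem apply_f01 (hτ : P.IsTau3 τ) : τ P.f01 = P.f10 := by
  simp only [f10, f01, map_smul, map_mul, map_add, map_sub, map_one, hτ.1, hτ.2.1, mul_add,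
    add_mul, mul_sub, sub_mul, one_mul, mul_one, P.xy_comm]
  module

theorem apply_x_mul_y (hτ : P.IsTau3 τ) : τ (P.x * P.y) = P.x * P.y := by
  rw [map_mul, hτ.1, hτ.2.1, P.xy_comm]

theorem apply_apply_z [CharZero K] (hτ : P.IsTau3 τ) : τ (τ P.z) = P.z := by
  rw [hτ.apply_z, map_sub, map_smul, map_mul, hτ.apply_f11, hτ.apply_z, mul_sub, mul_smul_comm,
    ← mul_assoc, P.f11_mul_f11]
  module

theorem symm_eq [CharZero K] (hτ : P.IsTau3 τ) : τ.symm = τ := by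
  have hsq : (τ : H →ₐ[K] H).comp τ = AlgHom.id K H := by
    refine AlgHom.ext_of_adjoin_eq_top P.adjoin_xyz_eq_top ?_
    rintro _ (rfl | rfl | rfl) <;> simp [hτ.1, hτ.2.1, hτ.apply_apply_z]
  ext h
  rw [AlgEquiv.symm_apply_eq]
  exact (AlgHom.congr_fun hsq h).symm

theorem apply_f00_mul_z [CharZero K] (hτ : P.IsTau3 τ) : τ (P.f00 * P.z) = P.f00 * P.z := by
  rw [map_mul, hτ.apply_f00, hτ.apply_z, mul_sub, mul_smul_comm, ← mul_assoc, P.f00_mul_f11,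
    zero_mul, smul_zero, sub_zero]

theorem apply_f10_mul_z [CharZero K] (hτ : P.IsTau3 τ) : τ (P.f10 * P.z) = P.f01 * P.z := by
  rw [map_mul, hτ.apply_f10, hτ.apply_z, mul_sub, mul_smul_comm, ← mul_assoc, P.f01_mul_f11,
    zero_mul, smul_zero, sub_zero]

theorem apply_f01_mul_z [CharZero K] (hτ : P.IsTau3 τ) : τ (P.f01 * P.z) = P.f10 * P.z := by
  rw [map_mul, hτ.apply_f01, hτ.apply_z, mul_sub, mul_smul_comm, ← mul_assoc, P.f10_mul_f11,
    zero_mul, smul_zero, sub_zero]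

theorem apply_f11_mul_z [CharZero K] (hτ : P.IsTau3 τ) : τ (P.f11 * P.z) = -(P.f11 * P.z) := by
  rw [map_mul, hτ.apply_f11, hτ.apply_z, mul_sub, mul_smul_comm, ← mul_assoc, P.f11_mul_f11]
  module

theorem act_apply_z (hτ : P.IsTau3 τ) {M : Type*} [AddCommGroup M] [Module K M]
    {Q : PreYD K H M} (hQ : Q.IsModule) (m : M) :
    Q.act (τ P.z) m = (2:K)⁻¹ • (Q.act P.z m + Q.act P.x (Q.act P.z m) + Q.act P.y (Q.act P.z m)
      - Q.act P.x (Q.act P.y (Q.act P.z m))) := by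
  simp only [hτ.2.2, map_smul, map_add, map_sub, LinearMap.smul_apply, LinearMap.add_apply,
    LinearMap.sub_apply, hQ.2]

theorem twist_equiv_M1 [CharZero K] (hτ : P.IsTau3 τ) {c : K} (hc : c ^ 2 = -1)
    {Q Q' : PreYD K H K} (hQ : Q.IsModule) (hQM : P.IsM1 c P.x Q) (hQ' : Q'.IsModule)
    (hQ'M : P.IsM1 (-c) P.y Q') : (Q.twist τ).Equiv Q' := by
  obtain ⟨hx, hy, hz, hco⟩ := hQM
  obtain ⟨hx', hy', hz', hco'⟩ := hQ'M
  refine PreYD.equiv_of_adjoin_eq_top (hQ.twist τ) hQ' P.adjoin_xyz_eq_top (.refl K K) ?_ ?_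
  · rintro _ (rfl | rfl | rfl) <;> ext
    all_goals simp only [LinearEquiv.refl_toLinearMap, LinearMap.id_comp, LinearMap.comp_id,
        PreYD.twist_act, hτ.1, hτ.2.1, hτ.act_apply_z hQ, hx, hy, hz, hx', hy', hz', neg_sq, hc,
        smul_eq_mul] <;>
      ring
  · ext
    simp [hco, hco', hτ.symm_eq, hτ.1]

theorem twist_equiv_Mg [CharZero K] (hτ : P.IsTau3 τ) {Q Q' : PreYD K H (K × K)}
    (hQ : Q.IsModule) (hQM : P.IsMg (P.x * P.y) P.x Q) (hQ' : Q'.IsModule)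
    (hQ'M : P.IsMg P.y (P.x * P.y) Q') : (Q.twist τ).Equiv Q' := by
  obtain ⟨hco₁, hco₂, hx₁, hy₁, hz₁, hx₂, hy₂, hz₂⟩ := hQM
  obtain ⟨hco₁', hco₂', hx₁', hy₁', hz₁', hx₂', hy₂', hz₂'⟩ := hQ'M
  have hf₁ : LinearEquiv.prodComm K K K E1 = E2 := rfl
  have hf₂ : LinearEquiv.prodComm K K K E2 = E1 := rfl
  refine PreYD.equiv_of_adjoin_eq_top (hQ.twist τ) hQ' P.adjoin_xyz_eq_top
    (LinearEquiv.prodComm K K K) ?_ ?_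
  · rintro _ (rfl | rfl | rfl) <;> refine linearMap_ext_E ?_ ?_ <;>
      simp only [LinearMap.comp_apply, LinearEquiv.coe_coe, PreYD.twist_act, hτ.1, hτ.2.1,
        hτ.act_apply_z hQ, hx₁, hy₁, hz₁, hx₂, hy₂, hz₂, map_neg, map_smul, map_add, map_sub, hf₁,
        hf₂, hx₁', hy₁', hz₁', hx₂', hy₂', hz₂'] <;>
      module
  · refine linearMap_ext_E ?_ ?_ <;>
      simp only [LinearMap.comp_apply, LinearEquiv.coe_coe, PreYD.twist_coact, hτ.symm_eq, hf₁,
        hf₂, hco₁, hco₂, hco₁', hco₂', TensorProduct.map_tmul, AlgEquiv.toLinearMap_apply, hτ.1,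
        hτ.apply_x_mul_y, LinearMap.id_apply]

theorem twist_equiv_Wp [CharZero K] (hτ : P.IsTau3 τ) {i b₁ b₂ : K}
    (hc : (i * b₁) ^ 2 = -1) {Q Q' : PreYD K H (K × K)}
    (hQ : Q.IsModule) (hQM : P.IsWp i b₁ b₂ Q) (hQ' : Q'.IsModule)
    (hQ'M : P.IsWp i (-b₁) b₂ Q') : (Q.twist τ).Equiv Q' := by
  obtain ⟨hx₁, hy₁, hz₁, hx₂, hy₂, hz₂, hco₁, hco₂⟩ := hQM
  obtain ⟨hx₁', hy₁', hz₁', hx₂', hy₂', hz₂', hco₁', hco₂'⟩ := hQ'M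
  have hc0 : -(i * b₁) ≠ 0 := fun h => by simp [neg_eq_zero.1 h] at hc
  -- the scale `-i b₁` turns the twisted coefficient `(f₀₁ + i b₁ f₁₀)z` into `(f₁₀ - i b₁ f₀₁)z`
  set f := (LinearEquiv.refl K K).prodCongr (LinearEquiv.smulOfNeZero K K _ hc0)
  have hf₁ : f E1 = E1 := by simp [f, E1]
  have hf₂ : f E2 = (-(i * b₁)) • E2 := by simp [f, E2]
  refine PreYD.equiv_of_adjoin_eq_top (hQ.twist τ) hQ' P.adjoin_xyz_eq_top f ?_ ?_
  · rintro _ (rfl | rfl | rfl) <;> refine linearMap_ext_E ?_ ?_ <;>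
      simp only [LinearMap.comp_apply, LinearEquiv.coe_coe, PreYD.twist_act, hτ.1, hτ.2.1,
        hτ.act_apply_z hQ, hx₁, hy₁, hz₁, hx₂, hy₂, hz₂, map_neg, map_smul, map_add, map_sub, hf₁,
        hf₂, hx₁', hy₁', hz₁', hx₂', hy₂', hz₂'] <;>
      module
  · refine linearMap_ext_E ?_ ?_ <;>
      simp only [LinearMap.comp_apply, LinearEquiv.coe_coe, PreYD.twist_coact, hτ.symm_eq, hf₁,
        hf₂, hco₁, hco₂, hco₁', hco₂', map_neg, map_smul, map_add, map_sub, TensorProduct.map_tmul,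
        AlgEquiv.toLinearMap_apply, LinearMap.id_apply, add_mul, sub_mul, smul_mul_assoc,
        hτ.apply_f00_mul_z, hτ.apply_f10_mul_z, hτ.apply_f01_mul_z, hτ.apply_f11_mul_z, add_tmul,
        sub_tmul, neg_tmul, tmul_neg, tmul_smul, ← smul_tmul', mul_neg, neg_mul, neg_smul,
        smul_neg] <;>
      match_scalars <;> grind

end IsTau3

end KPAlg

theorem twists_by_tau3_of_yd_modules_over_H8_general
    {K H : Type*} [Field K] [CharZero K]
    [Ring H] [HopfAlgebra K H] (P : KPAlg K H) (i : K) (hi : i ^ 2 = -1)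
    (τ : H ≃ₐ[K] H)
    (hτx : τ P.x = P.y) (hτy : τ P.y = P.x)
    (hτz : τ P.z = (2:K)⁻¹ • (P.z + P.x * P.z + P.y * P.z - P.x * P.y * P.z)) :
    (∀ b ∈ ({1, -1} : Set K),
      ∀ (Q Q' : PreYD K H K), Q.IsYD → P.IsM1 (b * i) P.x Q →
        Q'.IsYD → P.IsM1 (-(b * i)) P.y Q' → PreYD.Equiv (Q.twist τ) Q') ∧
    (∀ (Q Q' : PreYD K H (K × K)), Q.IsYD → P.IsMg (P.x * P.y) P.x Q →
        Q'.IsYD → P.IsMg P.y (P.x * P.y) Q' → PreYD.Equiv (Q.twist τ) Q') ∧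
    (∀ b₁ ∈ ({1, -1} : Set K),
      ∀ (Q Q' : PreYD K H (K × K)), Q.IsYD → P.IsWp i b₁ (-1) Q →
        Q'.IsYD → P.IsWp i (-b₁) (-1) Q' → PreYD.Equiv (Q.twist τ) Q') := by
  have hτ : P.IsTau3 τ := ⟨hτx, hτy, hτz⟩
  have hsq : ∀ b ∈ ({1, -1} : Set K), b ^ 2 = 1 := by rintro b (rfl | rfl) <;> norm_num
  refine ⟨fun b hb Q Q' hQ hQM hQ' hQ'M => ?_, fun Q Q' hQ hQM hQ' hQ'M => ?_,
    fun b₁ hb₁ Q Q' hQ hQM hQ' hQ'M => ?_⟩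
  · exact hτ.twist_equiv_M1 (by rw [mul_pow, hsq b hb, hi, one_mul]) hQ.isModule hQM
      hQ'.isModule hQ'M
  · exact hτ.twist_equiv_Mg hQ.isModule hQM hQ'.isModule hQ'M
  · exact hτ.twist_equiv_Wp (by rw [mul_pow, hsq b₁ hb₁, hi, mul_one]) hQ.isModule hQM
      hQ'.isModule hQ'M

/-- **Statement 16.** For the Hopf algebra automorphism `τ₃` of `H₈` with
`τ₃(x) = y`, `τ₃(y) = x`, `τ₃(z) = (1/2)(z + xz + yz - xyz)` one has, as
Yetter–Drinfeld modules over `H₈`: `(M⟨bi,x⟩)^{τ₃} ≅ M⟨-bi,y⟩` for `b = ±1`,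
`(M⟨(xy,x)⟩)^{τ₃} ≅ M⟨(y,xy)⟩`, and `(W^{b₁,-1})^{τ₃} ≅ W^{-b₁,-1}` for `b₁ = ±1`. -/
theorem twists_by_tau3_of_yd_modules_over_H8
    {K H : Type*} [Field K] [CharZero K] [IsAlgClosed K]
    [Ring H] [HopfAlgebra K H] (P : KPAlg K H) (i : K) (hi : i ^ 2 = -1)
    (τ : H ≃ₐ[K] H)
    (hτcoalg : ∀ h : H, Coalgebra.comul (R := K) (τ h) =
      (TensorProduct.map τ.toLinearMap τ.toLinearMap) (Coalgebra.comul (R := K) h))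
    (hτx : τ P.x = P.y) (hτy : τ P.y = P.x)
    (hτz : τ P.z = (2:K)⁻¹ • (P.z + P.x * P.z + P.y * P.z - P.x * P.y * P.z)) :
    (∀ b ∈ ({1, -1} : Set K),
      ∀ (Q Q' : PreYD K H K), Q.IsYD → P.IsM1 (b * i) P.x Q →
        Q'.IsYD → P.IsM1 (-(b * i)) P.y Q' → PreYD.Equiv (Q.twist τ) Q') ∧
    (∀ (Q Q' : PreYD K H (K × K)), Q.IsYD → P.IsMg (P.x * P.y) P.x Q →
        Q'.IsYD → P.IsMg P.y (P.x * P.y) Q' → PreYD.Equiv (Q.twist τ) Q') ∧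
    (∀ b₁ ∈ ({1, -1} : Set K),
      ∀ (Q Q' : PreYD K H (K × K)), Q.IsYD → P.IsWp i b₁ (-1) Q →
        Q'.IsYD → P.IsWp i (-b₁) (-1) Q' → PreYD.Equiv (Q.twist τ) Q') :=
  twists_by_tau3_of_yd_modules_over_H8_general P i hi τ hτx hτy hτz

end
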